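/- Every pre-circumscription satisfying cumulative transitivity (CT) is the KLM entailment defined by some simplified KLM model, i.e., a KLM model whose set of states is the set of all theories of L and whose labelling map l is the identity. -/
import Mathlib


/-- Formulas of a propositional language over variables `V`. -/
inductive Formula (V : Type) : Type
  | var : V → Formula V
  | neg : Formula V → Formula V
  | and : Formula V → Formula V → Formula V
  | or  : Formula V → Formula V → Formula V
  | imp : Formula V → Formula V → Formula V

/-- Classical satisfaction of a formula by an interpretation `μ ⊆ V`. -/
def Formula.Sat {V : Type} (μ : Set V) : Formula V → Prop
  | .var v => v ∈ μ
  | .neg φ => ¬ Formula.Sat μ φ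
  | .and φ ψ => Formula.Sat μ φ ∧ Formula.Sat μ ψ
  | .or φ ψ => Formula.Sat μ φ ∨ Formula.Sat μ ψ
  | .imp φ ψ => Formula.Sat μ φ → Formula.Sat μ ψ

/-- Classical consequence: every model of `T` satisfies `φ`. -/
def Entails {V : Type} (T : Set (Formula V)) (φ : Formula V) : Prop :=
  ∀ μ : Set V, (∀ ψ ∈ T, Formula.Sat μ ψ) → Formula.Sat μ φ

/-- `Th T` = set of classical consequences of `T`. -/
def Th {V : Type} (T : Set (Formula V)) : Set (Formula V) :=
  {φ | Entails T φ}

/-- A theory is a deductively closed set of formulas. -/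
def IsTheory {V : Type} (T : Set (Formula V)) : Prop :=
  Th T = T

/-- A pre-circumscription: values are theories, it is extensive,
and it respects full logical equivalence. -/
def IsPreCirc {V : Type} (f : Set (Formula V) → Set (Formula V)) : Prop :=
  (∀ T, IsTheory (f T)) ∧ (∀ T, T ⊆ f T) ∧
  (∀ T₁ T₂, Th T₁ = Th T₂ → f T₁ = f T₂)

/-- For a KLM model with labelling `l`, the set `S(T)` of states satisfying `T`. -/
def klmStates {V σ : Type} (l : σ → Set (Formula V)) (T : Set (Formula V)) : Set σ :=
  {s | Th T ⊆ l s}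

/-- The set `S_≺(T)` of `≺`-minimal states among those satisfying `T` (KLM model). -/
def klmMin {V σ : Type} (l : σ → Set (Formula V)) (prec : σ → σ → Prop)
    (T : Set (Formula V)) : Set σ :=
  {s | s ∈ klmStates l T ∧ ∀ s' ∈ klmStates l T, ¬ prec s' s}

/-- The KLM entailment defined by a KLM model `(σ, l, prec)`. -/
def CKLM {V σ : Type} (l : σ → Set (Formula V)) (prec : σ → σ → Prop)
    (T : Set (Formula V)) : Set (Formula V) :=
  {φ | ∀ s ∈ klmMin l prec T, φ ∈ l s}

/-- Smoothness (stopperedness) of a KLM model. -/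
def klmSmooth {V σ : Type} (l : σ → Set (Formula V)) (prec : σ → σ → Prop) : Prop :=
  ∀ T : Set (Formula V), ∀ s ∈ klmStates l T, s ∉ klmMin l prec T →
    ∃ s' ∈ klmMin l prec T, prec s' s

/-- For a MAK model with satisfaction relation `sat`, the set `S(T)` of states
satisfying every formula of `T`. -/
def makStates {V σ : Type} (sat : σ → Formula V → Prop) (T : Set (Formula V)) : Set σ :=
  {s | ∀ φ ∈ T, sat s φ}

/-- The set `S_≺(T)` of `≺`-minimal states among those satisfying `T` (MAK model). -/
def makMin {V σ : Type} (sat : σ → Formula V → Prop) (prec : σ → σ → Prop)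
    (T : Set (Formula V)) : Set σ :=
  {s | s ∈ makStates sat T ∧ ∀ s' ∈ makStates sat T, ¬ prec s' s}

/-- The MAK entailment defined by a MAK model `(σ, sat, prec)`. -/
def CMAK {V σ : Type} (sat : σ → Formula V → Prop) (prec : σ → σ → Prop)
    (T : Set (Formula V)) : Set (Formula V) :=
  {φ | ∀ s ∈ makMin sat prec T, sat s φ}

/-- The (monotonic) Tarski entailment `Cn_⊨` of a MAK model. -/
def Cn {V σ : Type} (sat : σ → Formula V → Prop) (T : Set (Formula V)) : Set (Formula V) :=
  {φ | ∀ s ∈ makStates sat T, sat s φ}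

/-- The set `Cn_⊨(s)` of formulas satisfied by a state `s` of a MAK model. -/
def CnState {V σ : Type} (sat : σ → Formula V → Prop) (s : σ) : Set (Formula V) :=
  {φ | sat s φ}


lemma subset_Th {V : Type} (T : Set (Formula V)) : T ⊆ Th T :=
  fun φ hφ μ hμ => hμ φ hφ

lemma Th_Th {V : Type} (T : Set (Formula V)) : Th (Th T) = Th T := by
  apply Set.Subset.antisymm
  · intro φ hφ μ hμ
    exact hφ μ (fun ψ hψ => hψ μ hμ)
  · exact subset_Th _

lemma Th_mono {V : Type} {T T' : Set (Formula V)} (h : T ⊆ T') : Th T ⊆ Th T' :=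
  fun φ hφ μ hμ => hφ μ (fun ψ hψ => hμ ψ (h hψ))

/-- Every pre-circumscription satisfying (CT) is the KLM entailment of a
simplified KLM model: states are all theories and the labelling map is the identity. -/
theorem preCirc_CT_is_simplified_klm {V : Type} (f : Set (Formula V) → Set (Formula V))
    (hf : IsPreCirc f)
    (hCT : ∀ T T' : Set (Formula V), T' ⊆ f T → f (T ∪ T') ⊆ f T) :
    ∃ prec : {T : Set (Formula V) // IsTheory T} → {T : Set (Formula V) // IsTheory T} → Prop,
      ∀ T : Set (Formula V), CKLM (fun s => s.val) prec T = f T := by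
  obtain ⟨hth, hext, heq⟩ := hf
  refine ⟨fun B A => B.val ⊆ A.val ∧ ¬ f B.val ⊆ A.val, fun T => ?_⟩
  have hfT : f (Th T) = f T := heq (Th T) T (Th_Th T)
  have hThf : Th T ⊆ f T := by
    have h1 : Th T ⊆ Th (f T) := Th_mono (hext T)
    rwa [hth T] at h1
  apply Set.Subset.antisymm
  · -- CKLM ⊆ f T : use the state f T, which is minimal
    intro φ hφ
    refine hφ ⟨f T, hth T⟩ ⟨hThf, ?_⟩
    rintro ⟨B, hB⟩ hB1 ⟨hB2, hB3⟩
    apply hB3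
    have hTB : T ∪ B = B := Set.union_eq_self_of_subset_left
      (fun x hx => hB1 (subset_Th T hx))
    have := hCT T B hB2
    rwa [hTB] at this
  · -- f T ⊆ CKLM
    intro φ hφ s hs
    have := hs.2 ⟨Th T, Th_Th T⟩ (show Th T ⊆ Th T from subset_rfl)
    by_contra hmem
    apply this
    constructor
    · exact hs.1
    · rw [hfT]
      intro hsub
      exact hmem (hsub hφ)
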